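/- arXiv:0712.0910 — 2 statements merged into one kernel-verified Lean document; each statement's English description precedes it below -/
import Mathlib

section
/- Let J : [0,T] → ℝ^{n×n} be bounded measurable with nonnegative off-diagonal entries, C bounded measurable, and let Λ be a diagonal matrix with Λ_{ii} + J_{ii}(t) ≥ 0 for all i and t; set B(t) = Λ + J(t), so B(t) has all entries nonnegative. If x is absolutely continuous with x'(t) ≤ J(t)x(t) + C(t) componentwise a.e., then x satisfies the integral inequality x(t) ≤ e^{−Λt}x(0) + ∫₀ᵗ e^{−Λ(t−s)}(B(s)x(s) + C(s)) ds componentwise for all t ∈ [0,T]. -/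
/-!
Fix a component `i` and write `y = xᵢ`, `L = Λᵢ`. Since `B = Λ + J`, the differential inequality
reads `y' + L y ≤ (B x)ᵢ + Cᵢ` a.e., i.e. `(e^{L s} y)' ≤ e^{L s} ((B x)ᵢ + Cᵢ)` a.e. The function
`e^{L s} y` is absolutely continuous, so the fundamental theorem of calculus for absolutely
continuous functions integrates this inequality over `[0, t]`; multiplying by `e^{-L t}` gives the
claim.
-/

open Set MeasureTheory

/-- Absolute continuity on `[a,b]` via the ε-δ total-variation criterion. -/
def AbsolutelyContinuousOn {E : Type*} [NormedAddCommGroup E] (f : ℝ → E) (a b : ℝ) : Prop :=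
  ∀ ε > 0, ∃ δ > 0, ∀ (N : ℕ) (c d : Fin N → ℝ),
    (∀ i, a ≤ c i ∧ c i ≤ d i ∧ d i ≤ b) →
    (Pairwise fun i j => Disjoint (Set.Ioo (c i) (d i)) (Set.Ioo (c j) (d j))) →
    (∑ i, (d i - c i)) < δ → (∑ i, ‖f (d i) - f (c i)‖) < ε

open Filter
open scoped NNReal Matrix

theorem AbsolutelyContinuousOn.absolutelyContinuousOnInterval {E : Type*} [NormedAddCommGroup E]
    {f : ℝ → E} {a b : ℝ} (hab : a ≤ b) (hf : AbsolutelyContinuousOn f a b) :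
    AbsolutelyContinuousOnInterval f a b := by
  rw [absolutelyContinuousOnInterval_iff]
  intro ε hε
  obtain ⟨δ, hδ, hfδ⟩ := hf ε hε
  refine ⟨δ, hδ, fun ⟨N, I⟩ ⟨hI, hdisj⟩ hlen => ?_⟩
  have hdist_f (p q : ℝ) : dist (f p) (f q) = ‖f (max p q) - f (min p q)‖ := by
    rcases le_total p q with h | h <;> simp [h, dist_eq_norm, norm_sub_rev]
  have hdist (p q : ℝ) : dist p q = max p q - min p q := by rw [Real.dist_eq, max_sub_min_eq_abs']
  simp only [hdist_f, hdist] at hlen ⊢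
  rw [← Fin.sum_univ_eq_sum_range (fun k => ‖f (max (I k).1 (I k).2) - f (min (I k).1 (I k).2)‖)]
  rw [← Fin.sum_univ_eq_sum_range (fun k => max (I k).1 (I k).2 - min (I k).1 (I k).2)] at hlen
  refine hfδ N (fun k => min (I k).1 (I k).2) (fun k => max (I k).1 (I k).2) (fun k => ?_)
    (fun k l hkl => ?_) hlen
  · obtain ⟨h1, h2⟩ := hI k (Finset.mem_range.2 k.2)
    rw [uIcc_of_le hab] at h1 h2
    exact ⟨le_min h1.1 h2.1, min_le_max, max_le h1.2 h2.2⟩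
  · exact (hdisj (Finset.mem_coe.2 (Finset.mem_range.2 k.2))
      (Finset.mem_coe.2 (Finset.mem_range.2 l.2)) (Fin.val_ne_of_ne hkl)).mono
      Ioo_subset_Ioc_self Ioo_subset_Ioc_self

theorem LipschitzWith.comp_absolutelyContinuousOnInterval {X Y : Type*} [PseudoMetricSpace X]
    [PseudoMetricSpace Y] {g : X → Y} {K : ℝ≥0} (hg : LipschitzWith K g) {f : ℝ → X} {a b : ℝ}
    (hf : AbsolutelyContinuousOnInterval f a b) : AbsolutelyContinuousOnInterval (g ∘ f) a b := by
  apply squeeze_zero (fun E ↦ Finset.sum_nonneg fun _ _ ↦ dist_nonneg) (fun E ↦ ?_)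
    (by simpa using Tendsto.const_mul (K : ℝ) hf)
  rw [Finset.mul_sum]
  exact Finset.sum_le_sum fun _ _ ↦ hg.dist_le_mul _ _

theorem AbsolutelyContinuousOnInterval.sub_le_integral_of_hasDerivAt_le {g φ : ℝ → ℝ} {a b : ℝ}
    (hab : a ≤ b) (hg : AbsolutelyContinuousOnInterval g a b) (hφ : IntervalIntegrable φ volume a b)
    (hderiv : ∀ᵐ s, s ∈ Icc a b → ∀ d, HasDerivAt g d s → d ≤ φ s) :
    g b - g a ≤ ∫ s in a..b, φ s := by
  rw [← hg.integral_deriv_eq_sub]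
  refine intervalIntegral.integral_mono_ae_restrict hab hg.intervalIntegrable_deriv hφ ?_
  rw [EventuallyLE, ae_restrict_iff' measurableSet_Icc]
  filter_upwards [hg.ae_differentiableAt, hderiv] with s hdiff hle hs
  exact hle hs _ (hdiff (uIcc_of_le hab ▸ hs)).hasDerivAt

theorem AbsolutelyContinuousOnInterval.le_exp_mul_add_integral_of_deriv_add_mul_le
    {y ψ : ℝ → ℝ} {a b L : ℝ} (hab : a ≤ b) (hy : AbsolutelyContinuousOnInterval y a b)
    (hψ : IntervalIntegrable ψ volume a b)
    (hderiv : ∀ᵐ s, s ∈ Icc a b → ∀ d, HasDerivAt y d s → d + L * y s ≤ ψ s) :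
    y b ≤ Real.exp (-L * (b - a)) * y a + ∫ s in a..b, Real.exp (-L * (b - s)) * ψ s := by
  have hexp : AbsolutelyContinuousOnInterval (fun s => Real.exp (L * s)) a b :=
    (by fun_prop : ContDiff ℝ 1 fun s => Real.exp (L * s)).contDiffOn.absolutelyContinuousOnInterval
  have hderiv_mul : ∀ᵐ s, s ∈ Icc a b → ∀ d, HasDerivAt (fun s => Real.exp (L * s) * y s) d s →
      d ≤ Real.exp (L * s) * ψ s := by
    filter_upwards [hy.ae_differentiableAt, hderiv] with s hdiff hle hs d hd
    have hy' := (hdiff (uIcc_of_le hab ▸ hs)).hasDerivAt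
    have hexp' := (Real.hasDerivAt_exp (L * s)).comp s ((hasDerivAt_id s).const_mul L)
    calc d = Real.exp (L * s) * (deriv y s + L * y s) := by
          rw [hd.unique (hexp'.mul hy')]; simp only [Function.comp_apply]; ring
      _ ≤ Real.exp (L * s) * ψ s := by gcongr; exact hle hs _ hy'
  have hFTC := (hexp.fun_mul hy).sub_le_integral_of_hasDerivAt_le hab
    (hψ.continuousOn_mul (by fun_prop : Continuous fun s => Real.exp (L * s)).continuousOn)
    hderiv_mul
  calc y b = Real.exp (-L * b) * (Real.exp (L * b) * y b) := by
        rw [← mul_assoc, ← Real.exp_add]; simp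
    _ ≤ Real.exp (-L * b) * (Real.exp (L * a) * y a + ∫ s in a..b, Real.exp (L * s) * ψ s) := by
        gcongr; linarith
    _ = _ := by
        simp only [mul_add, ← intervalIntegral.integral_const_mul, ← mul_assoc, ← Real.exp_add]
        ring_nf

theorem MeasureTheory.Integrable.bdd_mulVec {α m n : Type*} [Fintype n] [MeasurableSpace α]
    {μ : Measure α} {M : α → Matrix m n ℝ} {v : α → n → ℝ} {c : ℝ} (hv : Integrable v μ)
    (hM : AEStronglyMeasurable M μ) (hM_bound : ∀ᵐ t ∂μ, ∀ i j, ‖M t i j‖ ≤ c) (i : m) :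
    Integrable (fun t => (M t *ᵥ v t) i) μ := by
  simp only [Matrix.mulVec, dotProduct]
  refine integrable_finsetSum _ fun j _ => (hv.eval j).bdd_mul (c := c) ?_ ?_
  · exact (continuous_apply j).comp_aestronglyMeasurable
      ((continuous_apply i).comp_aestronglyMeasurable hM)
  · filter_upwards [hM_bound] with t ht using ht i j

theorem integral_ineq_of_differential_ineq_general
    {n : ℕ} (T : ℝ)
    (J : ℝ → Matrix (Fin n) (Fin n) ℝ) (C : ℝ → Fin n → ℝ) (x : ℝ → Fin n → ℝ)
    (Λ : Fin n → ℝ)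
    (B : ℝ → Matrix (Fin n) (Fin n) ℝ)
    (hB : ∀ t, B t = Matrix.diagonal Λ + J t)
    (hJmeas : AEStronglyMeasurable J (volume.restrict (Icc (0:ℝ) T)))
    (hCmeas : AEStronglyMeasurable C (volume.restrict (Icc (0:ℝ) T)))
    (hJbd : ∃ M, ∀ t ∈ Icc (0:ℝ) T, ∀ i j, |J t i j| ≤ M)
    (hCbd : ∃ M, ∀ t ∈ Icc (0:ℝ) T, ‖C t‖ ≤ M)
    (hxAC : AbsolutelyContinuousOn x 0 T)
    (hx' : ∀ᵐ t ∂(volume.restrict (Icc (0:ℝ) T)),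
      ∀ d : Fin n → ℝ, HasDerivWithinAt x d (Icc (0:ℝ) T) t →
        ∀ i, d i ≤ ((J t).mulVec (x t) + C t) i) :
    ∀ t ∈ Icc (0:ℝ) T, ∀ i, x t i ≤
      Real.exp (-Λ i * t) * x 0 i +
      ∫ s in (0:ℝ)..t,
        Real.exp (-Λ i * (t - s)) * (((B s).mulVec (x s)) i + C s i) := by
  intro t ht i
  have hT : 0 ≤ T := ht.1.trans ht.2
  have hxT : AbsolutelyContinuousOnInterval x 0 T := hxAC.absolutelyContinuousOnInterval hT
  have hBx (s : ℝ) : (B s *ᵥ x s) i = Λ i * x s i + (J s *ᵥ x s) i := by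
    simp [hB, Matrix.add_mulVec, Matrix.mulVec_diagonal]
  have hψ : IntegrableOn (fun s => (B s *ᵥ x s) i + C s i) (Icc 0 T) := by
    obtain ⟨MJ, hMJ⟩ := hJbd
    obtain ⟨MC, hMC⟩ := hCbd
    have hx_int : IntegrableOn x (Icc 0 T) := (uIcc_of_le hT ▸ hxT.continuousOn).integrableOn_Icc
    simp only [hBx]
    refine (((hx_int.eval i).const_mul (Λ i)).add (hx_int.bdd_mulVec hJmeas
      (ae_restrict_of_forall_mem measurableSet_Icc fun s hs => by simpa using hMJ s hs) i)).add ?_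
    exact Integrable.of_bound ((continuous_apply i).comp_aestronglyMeasurable hCmeas) MC
      (ae_restrict_of_forall_mem measurableSet_Icc fun s hs =>
        (norm_le_pi_norm _ i).trans (hMC s hs))
  have hderiv : ∀ᵐ s, s ∈ Icc 0 t → ∀ d, HasDerivAt (fun s => x s i) d s →
      d + Λ i * x s i ≤ (B s *ᵥ x s) i + C s i := by
    rw [ae_restrict_iff' measurableSet_Icc] at hx'
    filter_upwards [hxT.boundedVariationOn.ae_differentiableAt_of_mem_uIcc, hx']
      with s hdiff hle hs d hd
    have hsT : s ∈ Icc 0 T := Icc_subset_Icc_right ht.2 hs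
    have hx's := (hdiff (uIcc_of_le hT ▸ hsT)).hasDerivAt
    have := hle hsT _ hx's.hasDerivWithinAt i
    rw [hd.unique (hasDerivAt_pi.1 hx's i), hBx]
    simp only [Pi.add_apply] at this
    linarith
  have hxi : AbsolutelyContinuousOnInterval (fun s => x s i) 0 t :=
    (LipschitzWith.eval (α := fun _ : Fin n => ℝ) i).comp_absolutelyContinuousOnInterval
      (hxT.mono (uIcc_subset_uIcc_left (uIcc_of_le hT ▸ ht)))
  have hψt : IntervalIntegrable (fun s => (B s *ᵥ x s) i + C s i) volume 0 t :=
    (intervalIntegrable_iff_integrableOn_Icc_of_le ht.1).2 (hψ.mono_set (Icc_subset_Icc_right ht.2))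
  simpa using hxi.le_exp_mul_add_integral_of_deriv_add_mul_le ht.1 hψt hderiv

/-- If `J(t)` is bounded measurable with nonnegative off-diagonal entries, `Λ` is diagonal
(given by its diagonal entries) with `Λ_{ii} + J_{ii}(t) ≥ 0`, `B(t) = Λ + J(t)` (entrywise
nonnegative), and `x` is absolutely continuous with `x'(t) ≤ J(t)x(t) + C(t)` componentwise
a.e., then `x(t) ≤ e^{-Λt}x(0) + ∫₀ᵗ e^{-Λ(t-s)}(B(s)x(s) + C(s)) ds` componentwise. -/
theorem integral_ineq_of_differential_ineq
    {n : ℕ} (T : ℝ) (hT : 0 < T)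
    (J : ℝ → Matrix (Fin n) (Fin n) ℝ) (C : ℝ → Fin n → ℝ) (x : ℝ → Fin n → ℝ)
    (Λ : Fin n → ℝ)
    (B : ℝ → Matrix (Fin n) (Fin n) ℝ)
    (hB : ∀ t, B t = Matrix.diagonal Λ + J t)
    (hJmeas : AEStronglyMeasurable J (volume.restrict (Icc (0:ℝ) T)))
    (hCmeas : AEStronglyMeasurable C (volume.restrict (Icc (0:ℝ) T)))
    (hJbd : ∃ M, ∀ t ∈ Icc (0:ℝ) T, ∀ i j, |J t i j| ≤ M)
    (hCbd : ∃ M, ∀ t ∈ Icc (0:ℝ) T, ‖C t‖ ≤ M)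
    (hJoff : ∀ t ∈ Icc (0:ℝ) T, ∀ i j, i ≠ j → 0 ≤ J t i j)
    (hΛ : ∀ t ∈ Icc (0:ℝ) T, ∀ i, 0 ≤ Λ i + J t i i)
    (hxAC : AbsolutelyContinuousOn x 0 T)
    (hx' : ∀ᵐ t ∂(volume.restrict (Icc (0:ℝ) T)),
      ∀ d : Fin n → ℝ, HasDerivWithinAt x d (Icc (0:ℝ) T) t →
        ∀ i, d i ≤ ((J t).mulVec (x t) + C t) i) :
    ∀ t ∈ Icc (0:ℝ) T, ∀ i, x t i ≤
      Real.exp (-Λ i * t) * x 0 i +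
      ∫ s in (0:ℝ)..t,
        Real.exp (-Λ i * (t - s)) * (((B s).mulVec (x s)) i + C s i) :=
  integral_ineq_of_differential_ineq_general T J C x Λ B hB hJmeas hCmeas hJbd hCbd hxAC hx'
end

section
/- With the same setup as the comparison theorem for ODE perturbations, define instead [δ] = {f(x,y_c) − f(x,y) : x ∈ [W₂], y ∈ [W_y]}, C_i ≥ sup|[δ_i]|, and J_{ii} ≥ sup μ(∂f_i/∂x_i([W₂], y_c)), J_{ij} ≥ sup ‖∂f_i/∂x_j([W₂], y_c)‖ for i≠j (Jacobian blocks evaluated only at the fixed parameter y_c). Then the same conclusion holds: |x₁,ᵢ(t) − x₂,ᵢ(t)| ≤ (e^{J(t−t₀)}·|x₀ − x̄₀|)_i + (∫_{t₀}^t e^{J(t−s)} C ds)_i for all t ∈ [t₀, t₀+h] and all i. -/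
/-!
Write `e = x₁ - x₂` and split `e' = (f(x₁, y_c) - f(x₂, y_c)) + (f(x₂, y_c) - f(x₂, y))`. For a sign
`σ` with `σ eᵢ = |eᵢ|`, the mean value theorem on the segment `[x₂, x₁] ⊆ [W₂]` bounds `σ` times the
first term by `(J |e|)ᵢ`, and the second term is at most `Cᵢ`. As `J` has nonnegative off-diagonal
entries, a first-contact argument then keeps `|e|` strictly below the solution of
`v' = J v + C + ε`, `v(t₀) = |e(t₀)| + ε`, given by Duhamel's formula; let `ε → 0`.
-/

open Set MeasureTheory NormedSpace Filter Topology
open scoped Matrix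

variable {ι : Type*}

theorem intervalIntegral_eval [Fintype ι] {E : Type*} [NormedAddCommGroup E] [NormedSpace ℝ E]
    [CompleteSpace E] {f : ℝ → ι → E} {a b : ℝ} (hf : IntervalIntegrable f volume a b) (i : ι) :
    (∫ x in a..b, f x) i = ∫ x in a..b, f x i :=
  ((ContinuousLinearMap.proj (R := ℝ) (φ := fun _ : ι => E) i).intervalIntegral_comp_comm hf).symm

theorem sub_eq_add_integral_sub {E : Type*} [NormedAddCommGroup E] [NormedSpace ℝ E]
    {u w F G : ℝ → E} {u₀ w₀ : E} {a b : ℝ} (hu : ∀ t ∈ Icc a b, u t = u₀ + ∫ s in a..t, F s)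
    (hw : ∀ t ∈ Icc a b, w t = w₀ + ∫ s in a..t, G s) (hF : IntervalIntegrable F volume a b)
    (hG : IntervalIntegrable G volume a b) :
    ∀ t ∈ Icc a b, u t - w t = (u a - w a) + ∫ s in a..t, (F s - G s) := by
  intro t ht
  have ha : a ∈ Icc a b := ⟨le_rfl, ht.1.trans ht.2⟩
  have hsub : uIcc a t ⊆ uIcc a b := uIcc_subset_uIcc_left (Icc_subset_uIcc ht)
  rw [hu t ht, hw t ht, hu a ha, hw a ha,
    intervalIntegral.integral_sub (hF.mono_set hsub) (hG.mono_set hsub)]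
  simp only [intervalIntegral.integral_same, add_zero]
  abel

theorem integrableOn_comp_of_continuousOn_of_bounded {E P G : Type*} [NormedAddCommGroup E]
    [NormedAddCommGroup P] [ProperSpace P] [NormedAddCommGroup G] {F : E × P → G}
    (hF : Continuous F) {x : ℝ → E} {y : ℝ → P} {a b : ℝ} (hx : ContinuousOn x (Icc a b))
    (hy : AEStronglyMeasurable y (volume.restrict (Icc a b)))
    (hybd : ∃ M, ∀ t ∈ Icc a b, ‖y t‖ ≤ M) :
    IntegrableOn (fun t => F (x t, y t)) (Icc a b) := by
  obtain ⟨M, hM⟩ := hybd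
  obtain ⟨K, hK⟩ := ((isCompact_Icc.image_of_continuousOn hx).prod
    (isCompact_closedBall (0 : P) M)).exists_bound_of_continuousOn hF.continuousOn
  refine Integrable.mono' (integrable_const K)
    (hF.comp_aestronglyMeasurable ((hx.aestronglyMeasurable measurableSet_Icc).prodMk hy)) ?_
  filter_upwards [ae_restrict_mem measurableSet_Icc] with t ht
  exact hK _ ⟨mem_image_of_mem x ht, mem_closedBall_zero_iff.2 (hM t ht)⟩

theorem ContinuousOn.pi_abs {e : ℝ → ι → ℝ} {s : Set ℝ} (he : ContinuousOn e s) :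
    ContinuousOn (fun t => |e t|) s :=
  continuousOn_pi.2 fun j => ((continuous_apply j).comp_continuousOn he).abs

theorem eventually_nhdsLT_forall_Icc {τ : ℝ} {p : ℝ → Prop} (h : ∀ᶠ r in 𝓝[≤] τ, p r) :
    ∀ᶠ s in 𝓝[<] τ, ∀ r ∈ Icc s τ, p r := by
  obtain ⟨l, hl, hsub⟩ := mem_nhdsLE_iff_exists_Ioc_subset.1 h
  filter_upwards [Ioo_mem_nhdsLT hl] with s hs r hr using hsub ⟨hs.1.trans_le hr.1, hr.2⟩

theorem ContinuousOn.continuousWithinAt_Iic {X : Type*} [TopologicalSpace X] {w : ℝ → X}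
    {a b τ : ℝ} (hw : ContinuousOn w (Icc a b)) (hτ : τ ∈ Ioc a b) :
    ContinuousWithinAt w (Iic τ) τ :=
  (hw τ (Ioc_subset_Icc_self hτ)).mono_of_mem_nhdsWithin (Icc_mem_nhdsLE_of_mem hτ)

theorem mul_le_abs_of_abs_eq_one {σ : ℝ} (hσ : |σ| = 1) (x : ℝ) : σ * x ≤ |x| :=
  (le_abs_self _).trans_eq (by rw [abs_mul, hσ, one_mul])

theorem ContinuousWithinAt.exists_eventually_mul_eq_abs {φ : ℝ → ℝ} {s : Set ℝ} {τ : ℝ}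
    (hφ : ContinuousWithinAt φ s τ) (hτ : φ τ ≠ 0) :
    ∃ σ : ℝ, |σ| = 1 ∧ ∀ᶠ r in 𝓝[s] τ, σ * φ r = |φ r| := by
  have hσ : |Real.sign (φ τ)| = 1 := by
    rcases Real.sign_apply_eq_of_ne_zero _ hτ with h | h <;> simp [h]
  refine ⟨_, hσ, ?_⟩
  filter_upwards [(continuousWithinAt_const.mul hφ).eventually
    (lt_mem_nhds (Real.sign_mul_pos_of_ne_zero _ hτ))] with r (hr : 0 < Real.sign (φ τ) * φ r)
  rw [← abs_of_pos hr, abs_mul, hσ, one_mul]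

theorem forall_pos_of_no_first_zero [Finite ι] {w : ℝ → ι → ℝ} {a b : ℝ}
    (hw : ContinuousOn w (Icc a b)) (ha : ∀ i, 0 < w a i)
    (hzero : ∀ τ ∈ Ioc a b, (∀ t ∈ Icc a τ, 0 ≤ w t) → ∀ i, w τ i ≠ 0) :
    ∀ t ∈ Icc a b, ∀ i, 0 < w t i := by
  by_contra! hneg
  set S := Icc a b ∩ w ⁻¹' ⋃ i, {v | v i ≤ 0}
  have hS : IsClosed S := hw.preimage_isClosed_of_isClosed isClosed_Icc
    (isClosed_iUnion_of_finite fun i => isClosed_le (continuous_apply i) continuous_const)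
  have hSne : S.Nonempty := by
    obtain ⟨t, ht, i, hi⟩ := hneg
    exact ⟨t, ht, mem_iUnion.2 ⟨i, hi⟩⟩
  have hSbdd : BddBelow S := ⟨a, fun t ht => ht.1.1⟩
  obtain ⟨⟨haτ, hτb⟩, hτ⟩ := hS.csInf_mem hSne hSbdd
  obtain ⟨i, hi⟩ := mem_iUnion.1 hτ
  set τ := sInf S
  have haτ : a < τ := haτ.lt_of_ne fun h => (ha i).not_ge (h ▸ hi)
  have hbefore : Ico a τ ⊆ Icc a b ∩ w ⁻¹' Ici 0 := fun t ht =>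
    ⟨⟨ht.1, ht.2.le.trans hτb⟩, fun j => not_lt.1 fun hj =>
      (csInf_le hSbdd ⟨⟨ht.1, ht.2.le.trans hτb⟩, mem_iUnion.2 ⟨j, hj.le⟩⟩).not_gt ht.2⟩
  have hnonneg : ∀ t ∈ Icc a τ, 0 ≤ w t := fun t ht =>
    (closure_minimal hbefore (hw.preimage_isClosed_of_isClosed isClosed_Icc isClosed_Ici)
      (by rwa [closure_Ico haτ.ne])).2
  exact hzero τ ⟨haτ, hτb⟩ hnonneg i (le_antisymm hi (hnonneg τ ⟨haτ.le, le_rfl⟩ i))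

section Duhamel

variable [Fintype ι] [DecidableEq ι]

open scoped Matrix.Norms.Operator in
theorem hasDerivAt_exp_smul_mulVec (J : Matrix ι ι ℝ) (c : ι → ℝ) (t : ℝ) :
    HasDerivAt (fun u : ℝ => exp (u • J) *ᵥ c) (J *ᵥ (exp (t • J) *ᵥ c)) t := by
  let L : Matrix ι ι ℝ →L[ℝ] ι → ℝ :=
    LinearMap.toContinuousLinearMap ((Matrix.mulVecBilin ℝ ℝ).flip c)
  rw [Matrix.mulVec_mulVec]
  exact L.hasFDerivAt.comp_hasDerivAt t (hasDerivAt_exp_smul_const' J t)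

theorem continuous_exp_smul_mulVec (J : Matrix ι ι ℝ) (c : ι → ℝ) :
    Continuous (fun u : ℝ => exp (u • J) *ᵥ c) :=
  continuous_iff_continuousAt.2 fun t => (hasDerivAt_exp_smul_mulVec J c t).continuousAt

theorem mulVec_integral_exp_smul_mulVec (J : Matrix ι ι ℝ) (c : ι → ℝ) (τ : ℝ) :
    J *ᵥ ∫ u in 0..τ, exp (u • J) *ᵥ c = exp (τ • J) *ᵥ c - c := by
  let L : (ι → ℝ) →L[ℝ] ι → ℝ := LinearMap.toContinuousLinearMap (Matrix.mulVecLin J)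
  have hL := L.intervalIntegral_comp_comm
    ((continuous_exp_smul_mulVec J c).intervalIntegrable (μ := volume) 0 τ)
  simp only [L, LinearMap.coe_toContinuousLinearMap', Matrix.mulVecLin_apply] at hL
  rw [← hL, intervalIntegral.integral_eq_sub_of_hasDerivAt
    (fun u _ => hasDerivAt_exp_smul_mulVec J c u)
    ((continuous_const.matrix_mulVec (continuous_exp_smul_mulVec J c)).intervalIntegrable _ _),
    zero_smul, exp_zero, Matrix.one_mulVec]

/-- Duhamel's formula for the solution of `v' = J v + c`, `v t₀ = v₀`. -/
noncomputable def duhamel (J : Matrix ι ι ℝ) (t₀ : ℝ) (v₀ c : ι → ℝ) (t : ℝ) : ι → ℝ :=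
  exp ((t - t₀) • J) *ᵥ v₀ + ∫ s in t₀..t, exp ((t - s) • J) *ᵥ c

variable {J : Matrix ι ι ℝ} {t₀ : ℝ} {v₀ c : ι → ℝ}

theorem duhamel_eq (t : ℝ) :
    duhamel J t₀ v₀ c t = exp ((t - t₀) • J) *ᵥ v₀ + ∫ u in 0..t - t₀, exp (u • J) *ᵥ c := by
  rw [duhamel, intervalIntegral.integral_comp_sub_left (fun u => exp (u • J) *ᵥ c), sub_self]

theorem duhamel_self : duhamel J t₀ v₀ c t₀ = v₀ := by
  simp [duhamel]

theorem hasDerivAt_duhamel (t : ℝ) :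
    HasDerivAt (duhamel J t₀ v₀ c) (J *ᵥ duhamel J t₀ v₀ c t + c) t := by
  have hint := ((continuous_exp_smul_mulVec J c).integral_hasStrictDerivAt 0 (t - t₀)).hasDerivAt
  have h := ((hasDerivAt_exp_smul_mulVec J v₀ (t - t₀)).add hint).comp_sub_const t t₀
  have hderiv : J *ᵥ duhamel J t₀ v₀ c t + c =
      J *ᵥ (exp ((t - t₀) • J) *ᵥ v₀) + exp ((t - t₀) • J) *ᵥ c := by
    rw [duhamel_eq, Matrix.mulVec_add, mulVec_integral_exp_smul_mulVec]
    abel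
  rw [hderiv, funext duhamel_eq]
  exact h

@[fun_prop]
theorem continuous_duhamel : Continuous (duhamel J t₀ v₀ c) :=
  continuous_iff_continuousAt.2 fun t => hasDerivAt_duhamel t |>.continuousAt

theorem duhamel_sub_apply (s τ : ℝ) (i : ι) :
    duhamel J t₀ v₀ c τ i - duhamel J t₀ v₀ c s i =
      ∫ r in s..τ, ((J *ᵥ duhamel J t₀ v₀ c r) i + c i) := by
  have hcont : Continuous fun r => (J *ᵥ duhamel J t₀ v₀ c r) i + c i := by fun_prop
  exact (intervalIntegral.integral_eq_sub_of_hasDerivAt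
    (fun r _ => hasDerivAt_pi.1 (hasDerivAt_duhamel r) i) (hcont.intervalIntegrable s τ)).symm

theorem duhamel_add (v₀' c' : ι → ℝ) :
    duhamel J t₀ (v₀ + v₀') (c + c') = duhamel J t₀ v₀ c + duhamel J t₀ v₀' c' := by
  ext1 t
  simp only [duhamel_eq, Pi.add_apply, Matrix.mulVec_add]
  rw [intervalIntegral.integral_add ((continuous_exp_smul_mulVec J c).intervalIntegrable _ _)
    ((continuous_exp_smul_mulVec J c').intervalIntegrable _ _)]
  abel

theorem duhamel_smul (r : ℝ) : duhamel J t₀ (r • v₀) (r • c) = r • duhamel J t₀ v₀ c := by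
  ext1 t
  simp only [duhamel_eq, Pi.smul_apply, Matrix.mulVec_smul, intervalIntegral.integral_smul,
    smul_add]

end Duhamel

def Matrix.IsMetzler (J : Matrix ι ι ℝ) : Prop := ∀ i j, i ≠ j → 0 ≤ J i j

namespace Matrix.IsMetzler

variable [Fintype ι] {J : Matrix ι ι ℝ}

theorem diag_mul_le_mulVec (hJ : J.IsMetzler) {w : ι → ℝ} (hw : 0 ≤ w) (i : ι) :
    J i i * w i ≤ (J *ᵥ w) i := by
  classical
  rw [Matrix.mulVec, dotProduct, ← Finset.add_sum_erase _ _ (Finset.mem_univ i)]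
  exact le_add_of_nonneg_right (Finset.sum_nonneg fun j hj =>
    mul_nonneg (hJ i j (Finset.ne_of_mem_erase hj).symm) (hw j))

/-- Near a first zero of `wᵢ` the lower bound `wᵢ' ≥ (J w)ᵢ + ε ≥ Jᵢᵢ wᵢ + ε` forces `wᵢ` to
increase, so a nonnegative `w` with this property cannot reach zero. -/
theorem forall_pos_of_integral_le_sub (hJ : J.IsMetzler) {w : ℝ → ι → ℝ}
    {a b : ℝ} (hw : ContinuousOn w (Icc a b)) (ha : ∀ i, 0 < w a i)
    (hinc : ∀ τ ∈ Ioc a b, (∀ t ∈ Icc a τ, 0 ≤ w t) → ∀ i, w τ i = 0 →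
      ∃ ε > 0, ∀ᶠ s in 𝓝[<] τ, ∫ r in s..τ, ((J *ᵥ w r) i + ε) ≤ w τ i - w s i) :
    ∀ t ∈ Icc a b, ∀ i, 0 < w t i := by
  refine forall_pos_of_no_first_zero hw ha fun τ hτ hnonneg i hzero => ?_
  obtain ⟨ε, hε, hinc⟩ := hinc τ hτ hnonneg i hzero
  have hwτ : ContinuousWithinAt (fun r => |J i i| * w r i) (Iic τ) τ :=
    continuousWithinAt_const.mul (continuousWithinAt_pi.1 (hw.continuousWithinAt_Iic hτ) i)
  have hsmall : ∀ᶠ r in 𝓝[≤] τ, |J i i| * w r i < ε / 2 :=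
    hwτ.eventually_lt continuousWithinAt_const (by simpa [hzero] using half_pos hε)
  have hIoo : ∀ᶠ s in 𝓝[<] τ, s ∈ Ioo a τ := Ioo_mem_nhdsLT hτ.1
  obtain ⟨s, hs, ⟨has, hsτ⟩, hsmall⟩ :=
    (hinc.and (hIoo.and (eventually_nhdsLT_forall_Icc hsmall))).exists
  have hsub : Icc s τ ⊆ Icc a b := Icc_subset_Icc has.le hτ.2
  have hlower : ∀ r ∈ Icc s τ, ε / 2 ≤ (J *ᵥ w r) i + ε := fun r hr => by
    have hwr := hnonneg r ⟨has.le.trans hr.1, hr.2⟩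
    have := hJ.diag_mul_le_mulVec hwr i
    have := mul_le_mul_of_nonneg_right (neg_abs_le (J i i)) (hwr i)
    linarith [hsmall r hr]
  have hint : (τ - s) * ε / 2 ≤ ∫ r in s..τ, ((J *ᵥ w r) i + ε) := by
    simpa using intervalIntegral.integral_mono_on hsτ.le intervalIntegrable_const
      ((by fun_prop : ContinuousOn (fun r => (J *ᵥ w r) i + ε) (Icc a b)).mono hsub
        |>.intervalIntegrable_of_Icc (μ := volume) hsτ.le) hlower
  have hws : 0 ≤ w s i := hnonneg s ⟨has.le, hsτ.le⟩ i
  linarith [mul_pos (sub_pos.2 hsτ) hε]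

variable [DecidableEq ι]

theorem duhamel_pos (hJ : J.IsMetzler) {t₀ : ℝ} {v₀ c : ι → ℝ} (hv₀ : ∀ i, 0 < v₀ i)
    (hc : ∀ i, 0 < c i) {t : ℝ} (ht : t₀ ≤ t) (i : ι) : 0 < duhamel J t₀ v₀ c t i :=
  hJ.forall_pos_of_integral_le_sub continuous_duhamel.continuousOn (by simpa [duhamel_self])
    (fun τ _ _ j _ => ⟨c j, hc j, .of_forall fun s => (duhamel_sub_apply s τ j).ge⟩)
    t ⟨ht, le_rfl⟩ i

end Matrix.IsMetzler

section Comparison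

variable [Fintype ι] {J : Matrix ι ι ℝ} {C : ι → ℝ} {e g : ℝ → ι → ℝ} {a b : ℝ}

theorem abs_sub_abs_le_integral (he : ContinuousOn e (Icc a b))
    (hg : IntervalIntegrable g volume a b) (heg : ∀ t ∈ Icc a b, e t = e a + ∫ s in a..t, g s)
    (hkey : ∀ s ∈ Icc a b, ∀ i, ∀ σ : ℝ, |σ| = 1 → σ * e s i = |e s i| →
      σ * g s i ≤ (J *ᵥ |e s|) i + C i)
    {s τ σ : ℝ} (has : a ≤ s) (hsτ : s ≤ τ) (hτb : τ ≤ b) (hσ : |σ| = 1) (i : ι)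
    (hsign : ∀ r ∈ Icc s τ, σ * e r i = |e r i|) :
    |e τ i| - |e s i| ≤ ∫ r in s..τ, ((J *ᵥ |e r|) i + C i) := by
  have hsub : Icc s τ ⊆ Icc a b := Icc_subset_Icc has hτb
  have hgI : ∀ {u u'}, u ∈ Icc a b → u' ∈ Icc a b → IntervalIntegrable g volume u u' :=
    fun hu hu' => hg.mono_set (by rw [uIcc_of_le (hu.1.trans hu.2)]; exact uIcc_subset_Icc hu hu')
  have hs : s ∈ Icc a b := hsub ⟨le_rfl, hsτ⟩
  have hτ : τ ∈ Icc a b := hsub ⟨hsτ, le_rfl⟩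
  have ha : a ∈ Icc a b := ⟨le_rfl, has.trans hs.2⟩
  have hincr : e τ - e s = ∫ r in s..τ, g r := by
    rw [heg τ hτ, heg s hs, add_sub_add_left_eq_sub,
      intervalIntegral.integral_interval_sub_left (hgI ha hτ) (hgI ha hs)]
  have hgi : IntervalIntegrable (fun r => g r i) volume s τ :=
    ⟨(hgI hs hτ).1.eval i, (hgI hs hτ).2.eval i⟩
  have hbound : ContinuousOn (fun r => (J *ᵥ |e r|) i + C i) (Icc s τ) := by
    have := (he.mono hsub).pi_abs
    fun_prop
  calc |e τ i| - |e s i| = ∫ r in s..τ, σ * g r i := by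
        rw [← hsign τ ⟨hsτ, le_rfl⟩, ← hsign s ⟨le_rfl, hsτ⟩, ← mul_sub, ← Pi.sub_apply, hincr,
          intervalIntegral_eval (hgI hs hτ), intervalIntegral.integral_const_mul]
    _ ≤ ∫ r in s..τ, ((J *ᵥ |e r|) i + C i) :=
        intervalIntegral.integral_mono_on hsτ (hgi.const_mul σ)
          (hbound.intervalIntegrable_of_Icc hsτ) fun r hr => hkey r (hsub hr) i σ hσ (hsign r hr)

variable [DecidableEq ι]

theorem Matrix.IsMetzler.abs_lt_duhamel (hJ : J.IsMetzler) (hC : 0 ≤ C)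
    (he : ContinuousOn e (Icc a b))
    (hg : IntervalIntegrable g volume a b) (heg : ∀ t ∈ Icc a b, e t = e a + ∫ s in a..t, g s)
    (hkey : ∀ s ∈ Icc a b, ∀ i, ∀ σ : ℝ, |σ| = 1 → σ * e s i = |e s i| →
      σ * g s i ≤ (J *ᵥ |e s|) i + C i)
    {ε : ℝ} (hε : 0 < ε) :
    ∀ t ∈ Icc a b, ∀ i, |e t i| < duhamel J a (|e a| + ε • 1) (C + ε • 1) t i := by
  set v := duhamel J a (|e a| + ε • 1) (C + ε • 1) with hv_def
  have hv : ∀ t, a ≤ t → ∀ i, 0 < v t i := fun t ht => hJ.duhamel_pos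
    (fun i => by simpa using add_pos_of_nonneg_of_pos (abs_nonneg (e a i)) hε)
    (fun i => by simpa using add_pos_of_nonneg_of_pos (hC i) hε) ht
  have hw := hJ.forall_pos_of_integral_le_sub (w := fun t => v t - |e t|)
    (continuous_duhamel.continuousOn.sub he.pi_abs) (fun i => by simp [v, duhamel_self, hε]) ?_
  · exact fun t ht i => sub_pos.1 (hw t ht i)
  intro τ hτ _ i hzero
  have hτi : |e τ i| = v τ i := (sub_eq_zero.1 hzero).symm
  -- `v > 0` keeps `eᵢ` away from zero at a contact point, so its sign is locally constant there.
  have heτ : e τ i ≠ 0 := fun h => (hv τ hτ.1.le i).ne' (by rw [← hτi, h, abs_zero])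
  obtain ⟨σ, hσ, hsign⟩ :=
    (continuousWithinAt_pi.1 (he.continuousWithinAt_Iic hτ) i).exists_eventually_mul_eq_abs heτ
  refine ⟨ε, hε, ?_⟩
  filter_upwards [Ioo_mem_nhdsLT hτ.1, eventually_nhdsLT_forall_Icc hsign] with s ⟨has, hsτ⟩ hsign
  have hsub : Icc s τ ⊆ Icc a b := Icc_subset_Icc has.le hτ.2
  have he_incr := abs_sub_abs_le_integral he hg heg hkey has.le hsτ.le hτ.2 hσ i hsign
  have hvI : ContinuousOn (fun r => (J *ᵥ v r) i + (C + ε • 1) i) (Icc s τ) := by fun_prop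
  have heI : ContinuousOn (fun r => (J *ᵥ |e r|) i + C i) (Icc s τ) := by
    have := (he.mono hsub).pi_abs
    fun_prop
  have hsplit : ∫ r in s..τ, ((J *ᵥ (v r - |e r|)) i + ε) =
      (∫ r in s..τ, ((J *ᵥ v r) i + (C + ε • 1) i)) - ∫ r in s..τ, ((J *ᵥ |e r|) i + C i) := by
    rw [← intervalIntegral.integral_sub (hvI.intervalIntegrable_of_Icc hsτ.le)
      (heI.intervalIntegrable_of_Icc hsτ.le)]
    congr 1 with r
    simp only [Matrix.mulVec_sub, Pi.sub_apply, Pi.add_apply, Pi.smul_apply, Pi.one_apply,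
      smul_eq_mul, mul_one]
    ring
  have hv_incr := duhamel_sub_apply (J := J) (t₀ := a) (v₀ := |e a| + ε • 1) (c := C + ε • 1) s τ i
  rw [← hv_def] at hv_incr
  change _ ≤ (v τ i - |e τ i|) - (v s i - |e s i|)
  linarith

theorem Matrix.IsMetzler.abs_le_duhamel (hJ : J.IsMetzler) (hC : 0 ≤ C)
    (he : ContinuousOn e (Icc a b))
    (hg : IntervalIntegrable g volume a b) (heg : ∀ t ∈ Icc a b, e t = e a + ∫ s in a..t, g s)
    (hkey : ∀ s ∈ Icc a b, ∀ i, ∀ σ : ℝ, |σ| = 1 → σ * e s i = |e s i| →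
      σ * g s i ≤ (J *ᵥ |e s|) i + C i) :
    ∀ t ∈ Icc a b, |e t| ≤ duhamel J a |e a| C t := by
  intro t ht i
  set D := duhamel J a |e a| C t i
  set D₁ := duhamel J a 1 1 t i
  have hlim : Tendsto (fun ε => D + ε * D₁) (𝓝[>] 0) (𝓝 D) := by
    have : Tendsto (fun ε : ℝ => D + ε * D₁) (𝓝 0) (𝓝 (D + 0 * D₁)) :=
      tendsto_const_nhds.add (tendsto_id.mul tendsto_const_nhds)
    simpa using this.mono_left nhdsWithin_le_nhds
  refine ge_of_tendsto hlim (eventually_nhdsWithin_of_forall fun ε hε => ?_)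
  have := hJ.abs_lt_duhamel hC he hg heg hkey hε t ht i
  rw [duhamel_add, duhamel_smul] at this
  exact this.le

end Comparison

section Perturbation

variable [Fintype ι] [DecidableEq ι] {J : Matrix ι ι ℝ}

theorem mul_apply_le_mulVec_abs (L : (ι → ℝ) →L[ℝ] ℝ) {i : ι}
    (hdiag : L (Pi.single i 1) ≤ J i i) (hoff : ∀ j, i ≠ j → |L (Pi.single j 1)| ≤ J i j)
    {x : ι → ℝ} {σ : ℝ} (hσ : |σ| = 1) (hσx : σ * x i = |x i|) :
    σ * L x ≤ (J *ᵥ |x|) i := by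
  have hL : L x = ∑ j, x j * L (Pi.single j 1) := by
    conv_lhs => rw [← Finset.univ_sum_single x]
    refine (map_sum L _ _).trans (Finset.sum_congr rfl fun j _ => ?_)
    rw [← smul_eq_mul, ← L.map_smul, ← Pi.single_smul, smul_eq_mul, mul_one]
  rw [hL, Finset.mul_sum, Matrix.mulVec, dotProduct]
  refine Finset.sum_le_sum fun j _ => ?_
  rcases eq_or_ne i j with rfl | hij
  · rw [← mul_assoc, hσx, mul_comm (J i i)]
    exact mul_le_mul_of_nonneg_left hdiag (abs_nonneg _)
  · calc σ * (x j * L (Pi.single j 1)) ≤ |x j| * |L (Pi.single j 1)| := by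
          rw [← abs_mul]; exact mul_le_abs_of_abs_eq_one hσ _
      _ ≤ J i j * |x j| := by
          rw [mul_comm (J i j)]; exact mul_le_mul_of_nonneg_left (hoff j hij) (abs_nonneg _)

theorem mul_sub_le_mulVec_abs_sub {F : (ι → ℝ) → ℝ} {W : Set (ι → ℝ)} (hF : Differentiable ℝ F)
    (hW : Convex ℝ W) {i : ι} (hdiag : ∀ z ∈ W, fderiv ℝ F z (Pi.single i 1) ≤ J i i)
    (hoff : ∀ j, i ≠ j → ∀ z ∈ W, |fderiv ℝ F z (Pi.single j 1)| ≤ J i j)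
    {x y : ι → ℝ} (hx : x ∈ W) (hy : y ∈ W) {σ : ℝ} (hσ : |σ| = 1)
    (hσxy : σ * (x - y) i = |(x - y) i|) :
    σ * (F x - F y) ≤ (J *ᵥ |x - y|) i := by
  obtain ⟨z, hz, hmvt⟩ := domain_mvt (fun z _ => (hF z).hasFDerivAt.hasFDerivWithinAt) hW hy hx
  have hzW := hW.segment_subset hy hx hz
  rw [hmvt]
  exact mul_apply_le_mulVec_abs _ (hdiag z hzW) (fun j hij => hoff j hij z hzW) hσ hσxy

theorem mul_sub_apply_le_of_jacobian_bound {P : Type*} {f : (ι → ℝ) → P → ι → ℝ} {p₀ : P}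
    {W : Set (ι → ℝ)} {Wp : Set P} {C : ι → ℝ} {i : ι} (hf : Differentiable ℝ fun v => f v p₀ i)
    (hW : Convex ℝ W) (hC : ∀ x ∈ W, ∀ p ∈ Wp, |f x p₀ i - f x p i| ≤ C i)
    (hdiag : ∀ z ∈ W, fderiv ℝ (fun v => f v p₀ i) z (Pi.single i 1) ≤ J i i)
    (hoff : ∀ j, i ≠ j → ∀ z ∈ W, |fderiv ℝ (fun v => f v p₀ i) z (Pi.single j 1)| ≤ J i j)
    {x x' : ι → ℝ} (hx : x ∈ W) (hx' : x' ∈ W) {p : P} (hp : p ∈ Wp) {σ : ℝ} (hσ : |σ| = 1)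
    (hσx : σ * (x - x') i = |(x - x') i|) :
    σ * (f x p₀ - f x' p) i ≤ (J *ᵥ |x - x'|) i + C i := by
  rw [Pi.sub_apply, ← sub_add_sub_cancel _ (f x' p₀ i), mul_add]
  exact add_le_add (mul_sub_le_mulVec_abs_sub hf hW hdiag hoff hx hx' hσ hσx)
    ((mul_le_abs_of_abs_eq_one hσ _).trans (hC x' hx' p hp))

end Perturbation

theorem ode_perturbation_componentwise_bound_variant_general
    {n m : ℕ} (t₀ h : ℝ)
    (f : (Fin n → ℝ) → (Fin m → ℝ) → Fin n → ℝ)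
    (hf : ContDiff ℝ 1 (fun p : (Fin n → ℝ) × (Fin m → ℝ) => f p.1 p.2))
    (y : ℝ → Fin m → ℝ) (Wy : Set (Fin m → ℝ)) (y_c : Fin m → ℝ)
    (hymeas : AEStronglyMeasurable y (volume.restrict (Icc t₀ (t₀ + h))))
    (hybd : ∃ M, ∀ t ∈ Icc t₀ (t₀ + h), ‖y t‖ ≤ M)
    (hyWy : ∀ t ∈ Icc t₀ (t₀ + h), y t ∈ Wy)
    (x₀ xb₀ : Fin n → ℝ) (x₁ x₂ : ℝ → Fin n → ℝ)
    (hx₁cont : ContinuousOn x₁ (Icc t₀ (t₀ + h)))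
    (hx₂cont : ContinuousOn x₂ (Icc t₀ (t₀ + h)))
    (hx₁ : ∀ t ∈ Icc t₀ (t₀ + h), x₁ t = x₀ + ∫ s in t₀..t, f (x₁ s) y_c)
    (hx₂ : ∀ t ∈ Icc t₀ (t₀ + h), x₂ t = xb₀ + ∫ s in t₀..t, f (x₂ s) (y s))
    (W₁ W₂ : Set (Fin n → ℝ))
    (hW₂ : Convex ℝ W₂) (hW₁₂ : W₁ ⊆ W₂)
    (hx₁W : ∀ t ∈ Icc t₀ (t₀ + h), x₁ t ∈ W₁)
    (hx₂W : ∀ t ∈ Icc t₀ (t₀ + h), x₂ t ∈ W₂)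
    (C : Fin n → ℝ)
    (hC : ∀ i, ∀ x ∈ W₂, ∀ w ∈ Wy, |f x y_c i - f x w i| ≤ C i)
    (J : Matrix (Fin n) (Fin n) ℝ)
    (hJdiag : ∀ i, ∀ x ∈ W₂,
      fderiv ℝ (fun v => f v y_c i) x (Pi.single i 1) ≤ J i i)
    (hJoff : ∀ i j, i ≠ j → ∀ x ∈ W₂,
      |fderiv ℝ (fun v => f v y_c i) x (Pi.single j 1)| ≤ J i j) :
    ∀ t ∈ Icc t₀ (t₀ + h), ∀ i,
      |x₁ t i - x₂ t i| ≤
        ((NormedSpace.exp ((t - t₀) • J)).mulVec (fun j => |x₀ j - xb₀ j|)) i +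
        (∫ s in t₀..t, (NormedSpace.exp ((t - s) • J)).mulVec C) i := by
  intro t ht i
  have ht₀ : t₀ ∈ Icc t₀ (t₀ + h) := ⟨le_rfl, ht.1.trans ht.2⟩
  have hF : Continuous fun p : (Fin n → ℝ) × (Fin m → ℝ) => f p.1 p.2 := hf.continuous
  have hg₁ : IntervalIntegrable (fun s => f (x₁ s) y_c) volume t₀ (t₀ + h) :=
    (hF.comp_continuousOn (hx₁cont.prodMk continuousOn_const)).intervalIntegrable_of_Icc ht₀.2
  have hg₂ : IntervalIntegrable (fun s => f (x₂ s) (y s)) volume t₀ (t₀ + h) :=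
    (intervalIntegrable_iff_integrableOn_Icc_of_le ht₀.2).2
      (integrableOn_comp_of_continuousOn_of_bounded hF hx₂cont hymeas hybd)
  have hfx : ∀ i, Differentiable ℝ fun v => f v y_c i := fun i => differentiable_pi.1
    ((hf.differentiable one_ne_zero).comp (differentiable_id.prodMk (differentiable_const y_c))) i
  have hJ : J.IsMetzler := fun i j hij => (abs_nonneg _).trans (hJoff i j hij _ (hx₂W t₀ ht₀))
  have hC₀ : 0 ≤ C := fun i => (abs_nonneg _).trans (hC i _ (hx₂W t₀ ht₀) _ (hyWy t₀ ht₀))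
  have hbound := hJ.abs_le_duhamel (e := fun s => x₁ s - x₂ s)
    (g := fun s => f (x₁ s) y_c - f (x₂ s) (y s)) hC₀ (hx₁cont.sub hx₂cont) (hg₁.sub hg₂)
    (sub_eq_add_integral_sub hx₁ hx₂ hg₁ hg₂)
    (fun s hs i _ => mul_sub_apply_le_of_jacobian_bound (hfx i) hW₂ (hC i) (hJdiag i) (hJoff i)
      (hW₁₂ (hx₁W s hs)) (hx₂W s hs) (hyWy s hs)) t ht i
  have he₀ : x₁ t₀ - x₂ t₀ = x₀ - xb₀ := by simp [hx₁ t₀ ht₀, hx₂ t₀ ht₀]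
  simp only [he₀] at hbound
  exact hbound

/-- Variant of the componentwise comparison theorem for a perturbed ODE: `C` bounds the
perturbation `f(x, y_c) - f(x, y)` over the larger set `[W₂] × [W_y]`, while `J` bounds the
Jacobian blocks of `f` only over `[W₂] × {y_c}` (diagonal entries bound the logarithmic norm,
i.e. the partial derivative itself in the one-dimensional case; off-diagonal entries bound the
norms). Then the difference of the solution `x₁` of
`x₁' = f(x₁, y_c)` and the weak solution `x₂` of `x₂' = f(x₂, y(t))` satisfies
`|x₁ᵢ(t) - x₂ᵢ(t)| ≤ (e^{J(t-t₀)}|x₀ - xb₀|)ᵢ + (∫_{t₀}^t e^{J(t-s)} C ds)ᵢ`. -/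
theorem ode_perturbation_componentwise_bound_variant
    {n m : ℕ} (t₀ h : ℝ) (hh : 0 < h)
    (f : (Fin n → ℝ) → (Fin m → ℝ) → Fin n → ℝ)
    (hf : ContDiff ℝ 1 (fun p : (Fin n → ℝ) × (Fin m → ℝ) => f p.1 p.2))
    (y : ℝ → Fin m → ℝ) (Wy : Set (Fin m → ℝ)) (y_c : Fin m → ℝ)
    (hymeas : AEStronglyMeasurable y (volume.restrict (Icc t₀ (t₀ + h))))
    (hybd : ∃ M, ∀ t ∈ Icc t₀ (t₀ + h), ‖y t‖ ≤ M)
    (hWy : Convex ℝ Wy) (hyWy : ∀ t ∈ Icc t₀ (t₀ + h), y t ∈ Wy) (hyc : y_c ∈ Wy)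
    (x₀ xb₀ : Fin n → ℝ) (x₁ x₂ : ℝ → Fin n → ℝ)
    (hx₁cont : ContinuousOn x₁ (Icc t₀ (t₀ + h)))
    (hx₂cont : ContinuousOn x₂ (Icc t₀ (t₀ + h)))
    (hx₁ : ∀ t ∈ Icc t₀ (t₀ + h), x₁ t = x₀ + ∫ s in t₀..t, f (x₁ s) y_c)
    (hx₂ : ∀ t ∈ Icc t₀ (t₀ + h), x₂ t = xb₀ + ∫ s in t₀..t, f (x₂ s) (y s))
    (W₁ W₂ : Set (Fin n → ℝ))
    (hW₁ : Convex ℝ W₁) (hW₁c : IsCompact W₁)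
    (hW₂ : Convex ℝ W₂) (hW₂c : IsCompact W₂) (hW₁₂ : W₁ ⊆ W₂)
    (hx₁W : ∀ t ∈ Icc t₀ (t₀ + h), x₁ t ∈ W₁)
    (hx₂W : ∀ t ∈ Icc t₀ (t₀ + h), x₂ t ∈ W₂)
    (C : Fin n → ℝ)
    (hC : ∀ i, ∀ x ∈ W₂, ∀ w ∈ Wy, |f x y_c i - f x w i| ≤ C i)
    (J : Matrix (Fin n) (Fin n) ℝ)
    (hJdiag : ∀ i, ∀ x ∈ W₂,
      fderiv ℝ (fun v => f v y_c i) x (Pi.single i 1) ≤ J i i)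
    (hJoff : ∀ i j, i ≠ j → ∀ x ∈ W₂,
      |fderiv ℝ (fun v => f v y_c i) x (Pi.single j 1)| ≤ J i j) :
    ∀ t ∈ Icc t₀ (t₀ + h), ∀ i,
      |x₁ t i - x₂ t i| ≤
        ((NormedSpace.exp ((t - t₀) • J)).mulVec (fun j => |x₀ j - xb₀ j|)) i +
        (∫ s in t₀..t, (NormedSpace.exp ((t - s) • J)).mulVec C) i :=
  ode_perturbation_componentwise_bound_variant_general t₀ h f hf y Wy y_c hymeas hybd hyWy x₀ xb₀ x₁
    x₂ hx₁cont hx₂cont hx₁ hx₂ W₁ W₂ hW₂ hW₁₂ hx₁W hx₂W C hC J hJdiag hJoff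
end
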